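/- Let a > 0 and let U₀ : ℂ → ℂ be entire (complex differentiable everywhere). Then the function U(t,z) = e^{zt/2} · e^{t²/(4a)} · U₀(z + t/a) satisfies the heat equation for the generalized complex Dirac operator, namely ∂U/∂t (t,z) = (1/a)·∂U/∂z (t,z) + (z/2)·U(t,z) for all t ∈ ℝ and z ∈ ℂ, together with the initial condition U(0,z) = U₀(z) for all z ∈ ℂ. -/

import Mathlib

open Complex

/-!
Extend `t` to a complex variable `w`: `V(w, z) = e^{zw/2} e^{w²/(4a)} U₀(z + w/a)` is then
holomorphic in each variable, and by the product and chain rules both `∂V/∂w` and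
`(1/a) ∂V/∂z + (z/2) V` equal `(z/2 + w/(2a)) V + (1/a) e^{zw/2} e^{w²/(4a)} U₀'(z + w/a)`.
The real time derivative is the restriction of `∂V/∂w` to `w = t` real.
-/

noncomputable def diracHeat (a : ℂ) (U₀ : ℂ → ℂ) (w z : ℂ) : ℂ :=
  exp (z * w / 2) * exp (w ^ 2 / (4 * a)) * U₀ (z + w / a)

section

variable {a : ℂ} {U₀ : ℂ → ℂ}

theorem diracHeat_zero (z : ℂ) : diracHeat a U₀ 0 z = U₀ z := by
  simp [diracHeat]

theorem hasDerivAt_diracHeat_time (hU₀ : Differentiable ℂ U₀) (w z : ℂ) :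
    HasDerivAt (fun w' => diracHeat a U₀ w' z)
      ((z / 2 + w / (2 * a)) * diracHeat a U₀ w z
        + exp (z * w / 2) * exp (w ^ 2 / (4 * a)) * (deriv U₀ (z + w / a) / a)) w := by
  have hexp₁ : HasDerivAt (fun w' => exp (z * w' / 2)) (exp (z * w / 2) * (z / 2)) w := by
    simpa using (((hasDerivAt_id w).const_mul z).div_const 2).cexp
  have hexp₂ : HasDerivAt (fun w' => exp (w' ^ 2 / (4 * a)))
      (exp (w ^ 2 / (4 * a)) * (2 * w / (4 * a))) w := by
    simpa using ((hasDerivAt_pow 2 w).div_const (4 * a)).cexp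
  have hU : HasDerivAt (fun w' => U₀ (z + w' / a)) (deriv U₀ (z + w / a) * (1 / a)) w :=
    (hU₀ _).hasDerivAt.comp w (((hasDerivAt_id w).div_const a).const_add z)
  refine ((hexp₁.mul hexp₂).mul hU).congr_deriv ?_
  simp only [diracHeat, Pi.mul_apply]
  ring

theorem hasDerivAt_diracHeat_space (hU₀ : Differentiable ℂ U₀) (w z : ℂ) :
    HasDerivAt (fun z' => diracHeat a U₀ w z')
      (w / 2 * diracHeat a U₀ w z
        + exp (z * w / 2) * exp (w ^ 2 / (4 * a)) * deriv U₀ (z + w / a)) z := by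
  have hexp : HasDerivAt (fun z' => exp (z' * w / 2)) (exp (z * w / 2) * (w / 2)) z := by
    simpa using (((hasDerivAt_id z).mul_const w).div_const 2).cexp
  have hU : HasDerivAt (fun z' => U₀ (z' + w / a)) (deriv U₀ (z + w / a)) z := by
    simpa [Function.comp_def] using (hU₀ _).hasDerivAt.comp z ((hasDerivAt_id z).add_const (w / a))
  refine ((hexp.mul_const (exp (w ^ 2 / (4 * a)))).mul hU).congr_deriv ?_
  simp only [diracHeat]
  ring

theorem hasDerivAt_diracHeat_time_eq_dirac (hU₀ : Differentiable ℂ U₀) (w z : ℂ) :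
    HasDerivAt (fun w' => diracHeat a U₀ w' z)
      (1 / a * deriv (fun z' => diracHeat a U₀ w z') z + z / 2 * diracHeat a U₀ w z) w := by
  convert hasDerivAt_diracHeat_time hU₀ w z using 1
  rw [(hasDerivAt_diracHeat_space hU₀ w z).deriv]
  ring

end

theorem complex_dirac_heat (a : ℝ) (U₀ : ℂ → ℂ)
    (hU₀ : Differentiable ℂ U₀)
    (U : ℝ → ℂ → ℂ)
    (hU : ∀ t z, U t z =
      Complex.exp (z * t / 2) * Complex.exp (t ^ 2 / (4 * a)) * U₀ (z + t / a)) :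
    (∀ (t : ℝ) (z : ℂ),
        deriv (fun t' : ℝ => U t' z) t =
          (1 / (a : ℂ)) * deriv (fun z' : ℂ => U t z') z + (z / 2) * U t z) ∧
    (∀ z : ℂ, U 0 z = U₀ z) := by
  have hU_eq : U = fun (t : ℝ) z => diracHeat a U₀ t z := funext₂ hU
  subst hU_eq
  exact ⟨fun t z => ((hasDerivAt_diracHeat_time_eq_dirac hU₀ t z).comp_ofReal).deriv,
    fun z => by simpa using diracHeat_zero (a := a) (U₀ := U₀) z⟩
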